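/- The function W_en(ϱ) := 1 − ϱ V_en^1(ϱ), where V_en^1(ϱ) = 4 ∫_0^{1/2} cos²(πs)/√(ϱ²+s²) ds, satisfies 0 ≤ W_en ≤ 1 and ∫_0^∞ W_en(ϱ) dϱ = 1/4 − 1/π². -/

import Mathlib

/-!
Since `∫_0^{1/2} cos²(πs) ds = 1/4`, one has
`W_en(ϱ) = 4 ∫_0^{1/2} cos²(πs) (1 - ϱ/√(ϱ² + s²)) ds`, and the integrand lies between `0` and
`cos²(πs)`, which gives the bounds. For fixed `s > 0`, `1 - ϱ/√(ϱ² + s²)` is the derivative in `ϱ`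
of `ϱ - √(ϱ² + s²)`, which increases from `-s` to `0` on `(0, ∞)`; so after exchanging the order
of integration (the integrand is nonnegative) the integral becomes
`4 ∫_0^{1/2} s cos²(πs) ds = 1/4 - 1/π²`.
-/

open Real MeasureTheory intervalIntegral

/-- The effective electron–nucleus potential at width `1`:
`V_en^1(ϱ) = 4 ∫_0^{1/2} cos²(πs) / √(ϱ² + s²) ds`. -/
noncomputable def Ven1 (ϱ : ℝ) : ℝ :=
  4 * ∫ s in (0 : ℝ)..(1 / 2 : ℝ), Real.cos (π * s) ^ 2 / Real.sqrt (ϱ ^ 2 + s ^ 2)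

open Set Filter Topology

lemma le_sqrt_sq_add_sq (x s : ℝ) : x ≤ √(x ^ 2 + s ^ 2) :=
  calc x ≤ |x| := le_abs_self x
    _ = √(x ^ 2) := (sqrt_sq_eq_abs x).symm
    _ ≤ √(x ^ 2 + s ^ 2) := sqrt_le_sqrt (le_add_of_nonneg_right (sq_nonneg s))

lemma div_sqrt_sq_add_sq_le_one (x s : ℝ) : x / √(x ^ 2 + s ^ 2) ≤ 1 :=
  div_le_one_of_le₀ (le_sqrt_sq_add_sq x s) (sqrt_nonneg _)

lemma hasDerivAt_sub_sqrt_sq_add_sq {s : ℝ} (hs : s ≠ 0) (x : ℝ) :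
    HasDerivAt (fun x => x - √(x ^ 2 + s ^ 2)) (1 - x / √(x ^ 2 + s ^ 2)) x := by
  have hpos : x ^ 2 + s ^ 2 ≠ 0 := by positivity
  refine ((hasDerivAt_id' x).sub
    (((hasDerivAt_pow 2 x).add_const (s ^ 2)).sqrt hpos)).congr_deriv ?_
  norm_num
  field_simp

lemma tendsto_sub_sqrt_sq_add_sq_atTop (s : ℝ) :
    Tendsto (fun x => x - √(x ^ 2 + s ^ 2)) atTop (𝓝 0) := by
  suffices Tendsto (fun x => √(x ^ 2 + s ^ 2) - x) atTop (𝓝 0) by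
    simpa using this.neg
  refine squeeze_zero' ?_ ?_ (by simpa using tendsto_inv_atTop_zero.const_mul (s ^ 2))
  · filter_upwards with x
    exact sub_nonneg.2 (le_sqrt_sq_add_sq x s)
  · filter_upwards [eventually_gt_atTop 0] with x hx
    rw [sub_le_iff_le_add', sqrt_le_left (by positivity)]
    field_simp
    nlinarith [sq_nonneg (s ^ 2)]

lemma integrableOn_Ioi_one_sub_div_sqrt_sq_add_sq {s : ℝ} (hs : s ≠ 0) :
    IntegrableOn (fun x => 1 - x / √(x ^ 2 + s ^ 2)) (Ioi 0) :=
  integrableOn_Ioi_deriv_of_nonneg' (fun x _ => hasDerivAt_sub_sqrt_sq_add_sq hs x)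
    (fun x _ => sub_nonneg.2 (div_sqrt_sq_add_sq_le_one x s))
    (tendsto_sub_sqrt_sq_add_sq_atTop s)

lemma integral_Ioi_one_sub_div_sqrt_sq_add_sq {s : ℝ} (hs : s ≠ 0) :
    ∫ x in Ioi 0, (1 - x / √(x ^ 2 + s ^ 2)) = |s| := by
  rw [integral_Ioi_of_hasDerivAt_of_nonneg' (fun x _ => hasDerivAt_sub_sqrt_sq_add_sq hs x)
    (fun x _ => sub_nonneg.2 (div_sqrt_sq_add_sq_le_one x s))
    (tendsto_sub_sqrt_sq_add_sq_atTop s)]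
  simp [sqrt_sq_eq_abs]

lemma integral_cos_sq_pi_mul : ∫ s in (0 : ℝ)..1 / 2, cos (π * s) ^ 2 = 1 / 4 := by
  have hderiv : ∀ s, HasDerivAt (fun s => s / 2 + sin (2 * π * s) / (4 * π))
      (cos (π * s) ^ 2) s := by
    intro s
    refine (((hasDerivAt_id' s).div_const 2).add
      (((hasDerivAt_id' s).const_mul (2 * π)).sin.div_const (4 * π))).congr_deriv ?_
    rw [cos_sq, show 2 * (π * s) = 2 * π * s by ring]
    field_simp
    ring
  rw [integral_eq_sub_of_hasDerivAt (fun s _ => hderiv s)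
    ((by fun_prop : Continuous fun s => cos (π * s) ^ 2).intervalIntegrable _ _),
    show 2 * π * (1 / 2 : ℝ) = π by ring]
  simp only [sin_pi, mul_zero, sin_zero]
  norm_num

lemma integral_mul_cos_sq_pi_mul :
    ∫ s in (0 : ℝ)..1 / 2, s * cos (π * s) ^ 2 = 1 / 16 - 1 / (4 * π ^ 2) := by
  have hderiv : ∀ s, HasDerivAt
      (fun s => s ^ 2 / 4 + s * sin (2 * π * s) / (4 * π) + cos (2 * π * s) / (8 * π ^ 2))
      (s * cos (π * s) ^ 2) s := by
    intro s
    have h2π := (hasDerivAt_id' s).const_mul (2 * π)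
    refine ((((hasDerivAt_pow 2 s).div_const 4).add
      (((hasDerivAt_id' s).mul h2π.sin).div_const (4 * π))).add
      (h2π.cos.div_const (8 * π ^ 2))).congr_deriv ?_
    rw [cos_sq, show 2 * (π * s) = 2 * π * s by ring]
    field_simp
    ring
  rw [integral_eq_sub_of_hasDerivAt (fun s _ => hderiv s)
    ((by fun_prop : Continuous fun s => s * cos (π * s) ^ 2).intervalIntegrable _ _),
    show 2 * π * (1 / 2 : ℝ) = π by ring]
  simp only [sin_pi, cos_pi, mul_zero, sin_zero, cos_zero]
  field_simp
  ring

noncomputable def wenKernel (ϱ s : ℝ) : ℝ := cos (π * s) ^ 2 * (1 - ϱ / √(ϱ ^ 2 + s ^ 2))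

lemma wenKernel_nonneg (ϱ s : ℝ) : 0 ≤ wenKernel ϱ s :=
  mul_nonneg (sq_nonneg _) (sub_nonneg.2 (div_sqrt_sq_add_sq_le_one ϱ s))

lemma wenKernel_le {ϱ : ℝ} (hϱ : 0 ≤ ϱ) (s : ℝ) : wenKernel ϱ s ≤ cos (π * s) ^ 2 :=
  mul_le_of_le_one_right (sq_nonneg _) (sub_le_self _ (by positivity))

lemma continuous_wenKernel {ϱ : ℝ} (hϱ : ϱ ≠ 0) : Continuous (wenKernel ϱ) := by
  unfold wenKernel
  have hsqrt : Continuous fun s => √(ϱ ^ 2 + s ^ 2) := by fun_prop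
  exact (by fun_prop : Continuous fun s => cos (π * s) ^ 2).mul
    (continuous_const.sub (continuous_const.div hsqrt fun s => by positivity))

lemma one_sub_mul_Ven1_eq_integral_wenKernel {ϱ : ℝ} (hϱ : ϱ ≠ 0) :
    1 - ϱ * Ven1 ϱ = 4 * ∫ s in (0 : ℝ)..1 / 2, wenKernel ϱ s := by
  have hcos : Continuous fun s => cos (π * s) ^ 2 := by fun_prop
  have hV : Continuous fun s => cos (π * s) ^ 2 / √(ϱ ^ 2 + s ^ 2) :=
    hcos.div (by fun_prop) fun s => by positivity
  have hK : ∀ s, wenKernel ϱ s = cos (π * s) ^ 2 - ϱ * (cos (π * s) ^ 2 / √(ϱ ^ 2 + s ^ 2)) :=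
    fun s => by unfold wenKernel; ring
  simp_rw [hK]
  rw [integral_sub (hcos.intervalIntegrable _ _) ((hV.intervalIntegrable _ _).const_mul ϱ),
    intervalIntegral.integral_const_mul, integral_cos_sq_pi_mul, Ven1]
  ring

lemma integral_Ioi_wenKernel {s : ℝ} (hs : 0 < s) :
    ∫ ϱ in Ioi 0, wenKernel ϱ s = s * cos (π * s) ^ 2 := by
  simp only [wenKernel]
  rw [MeasureTheory.integral_const_mul, integral_Ioi_one_sub_div_sqrt_sq_add_sq hs.ne',
    abs_of_pos hs, mul_comm]

lemma integrable_uncurry_wenKernel :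
    Integrable (Function.uncurry wenKernel)
      ((volume.restrict (Ioi 0)).prod (volume.restrict (Ioc 0 (1 / 2)))) := by
  have hmeas : Measurable (Function.uncurry wenKernel) := by
    unfold Function.uncurry wenKernel
    fun_prop
  rw [integrable_prod_iff' hmeas.aestronglyMeasurable]
  constructor
  · filter_upwards [ae_restrict_mem measurableSet_Ioc] with s hs
    exact (integrableOn_Ioi_one_sub_div_sqrt_sq_add_sq hs.1.ne').const_mul (cos (π * s) ^ 2)
  · refine ((by fun_prop : Continuous fun s => s * cos (π * s) ^ 2).integrableOn_Ioc).congr ?_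
    filter_upwards [ae_restrict_mem measurableSet_Ioc] with s hs
    simp only [Function.uncurry, Real.norm_of_nonneg (wenKernel_nonneg _ s)]
    exact (integral_Ioi_wenKernel hs.1).symm

lemma integral_Ioi_one_sub_mul_Ven1 :
    ∫ ϱ in Ioi 0, (1 - ϱ * Ven1 ϱ) = 4 * ∫ s in (0 : ℝ)..1 / 2, s * cos (π * s) ^ 2 := by
  calc ∫ ϱ in Ioi 0, (1 - ϱ * Ven1 ϱ)
      = ∫ ϱ in Ioi 0, 4 * ∫ s in Ioc 0 (1 / 2), wenKernel ϱ s := by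
        refine setIntegral_congr_fun measurableSet_Ioi fun ϱ hϱ => ?_
        rw [one_sub_mul_Ven1_eq_integral_wenKernel (ne_of_gt hϱ), integral_of_le (by norm_num)]
    _ = 4 * ∫ s in Ioc 0 (1 / 2), ∫ ϱ in Ioi 0, wenKernel ϱ s := by
        rw [MeasureTheory.integral_const_mul, integral_integral_swap integrable_uncurry_wenKernel]
    _ = 4 * ∫ s in (0 : ℝ)..1 / 2, s * cos (π * s) ^ 2 := by
        rw [integral_of_le (by norm_num)]
        congr 1
        exact setIntegral_congr_fun measurableSet_Ioc fun s hs => integral_Ioi_wenKernel hs.1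

/-- `W_en(ϱ) := 1 - ϱ V_en^1(ϱ)` satisfies `0 ≤ W_en ≤ 1` on `(0,∞)` and
`∫_0^∞ W_en(ϱ) dϱ = 1/4 - 1/π²`. -/
theorem Wen_bounds_and_integral :
    (∀ ϱ : ℝ, 0 < ϱ → 0 ≤ 1 - ϱ * Ven1 ϱ ∧ 1 - ϱ * Ven1 ϱ ≤ 1) ∧
    ∫ ϱ in Set.Ioi (0 : ℝ), (1 - ϱ * Ven1 ϱ) = 1 / 4 - 1 / π ^ 2 := by
  refine ⟨fun ϱ hϱ => ?_, ?_⟩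
  · rw [one_sub_mul_Ven1_eq_integral_wenKernel hϱ.ne']
    have hint := (continuous_wenKernel hϱ.ne').intervalIntegrable (μ := volume) 0 (1 / 2)
    have hnonneg : 0 ≤ ∫ s in (0 : ℝ)..1 / 2, wenKernel ϱ s :=
      integral_nonneg (by norm_num) fun s _ => wenKernel_nonneg ϱ s
    have hle : ∫ s in (0 : ℝ)..1 / 2, wenKernel ϱ s ≤ 1 / 4 :=
      integral_cos_sq_pi_mul ▸ integral_mono_on (by norm_num) hint
        ((by fun_prop : Continuous fun s => cos (π * s) ^ 2).intervalIntegrable _ _)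
        fun s _ => wenKernel_le hϱ.le s
    constructor <;> linarith
  · rw [integral_Ioi_one_sub_mul_Ven1, integral_mul_cos_sq_pi_mul]
    ring
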